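/- arXiv:2001.10121 — 2 statements merged into one kernel-verified Lean document; each statement's English description precedes it below -/
import Mathlib

section
/- Let a > e² and b > 0, and set f(x) = (1 + a·exp(-x/b))·x for x ≥ 0. Then the equation f'(x) = 0 has exactly two solutions in (b, ∞), namely x₀ = b·(1 - W₀(-e/a)) and x₁ = b·(1 - W₋₁(-e/a)), where W₀ and W₋₁ are the two real branches of the Lambert W function; moreover b < x₀ < 2b < x₁, f''(x₀) < 0 and f''(x₁) > 0. -/
/-!
Put `z = 1 - x / b`. Since `exp (-x / b) = exp (z - 1)`, the derivative
`f' x = 1 + a exp (-x / b) (1 - x / b)` vanishes exactly when `z exp z = -e / a`. The map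
`z ↦ z exp z` is strictly decreasing on `(-∞, -1]` and strictly increasing on `[-1, ∞)`, so this
equation has no solutions besides `w₀` and `w₁`, and `a > e²` rules out `w₀ = w₁ = -1`. The second
derivative is `f'' x = a exp (-x / b) (x - 2b) / b²`, whose sign is that of `x - 2b`.
-/

open Real

section MulExp

lemma hasDerivAt_mul_exp (z : ℝ) :
    HasDerivAt (fun z : ℝ => z * exp z) ((z + 1) * exp z) z :=
  ((hasDerivAt_id z).mul (hasDerivAt_exp z)).congr_deriv (by simp only [id]; ring)

lemma strictMonoOn_mul_exp : StrictMonoOn (fun z : ℝ => z * exp z) (Set.Ici (-1)) := by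
  refine strictMonoOn_of_deriv_pos (convex_Ici _) (by fun_prop) fun z hz => ?_
  rw [interior_Ici, Set.mem_Ioi] at hz
  rw [(hasDerivAt_mul_exp z).deriv]
  exact mul_pos (by linarith) (exp_pos z)

lemma strictAntiOn_mul_exp : StrictAntiOn (fun z : ℝ => z * exp z) (Set.Iic (-1)) := by
  refine strictAntiOn_of_deriv_neg (convex_Iic _) (by fun_prop) fun z hz => ?_
  rw [interior_Iic, Set.mem_Iio] at hz
  rw [(hasDerivAt_mul_exp z).deriv]
  exact mul_neg_of_neg_of_pos (by linarith) (exp_pos z)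

lemma mul_exp_eq_iff {w₀ w₁ z : ℝ} (hw₀ : -1 ≤ w₀) (hw₁ : w₁ ≤ -1)
    (h : w₀ * exp w₀ = w₁ * exp w₁) : z * exp z = w₀ * exp w₀ ↔ z = w₀ ∨ z = w₁ := by
  refine ⟨fun hz => ?_, ?_⟩
  · rcases le_total (-1) z with hz₁ | hz₁
    · exact .inl (strictMonoOn_mul_exp.injOn hz₁ hw₀ hz)
    · exact .inr (strictAntiOn_mul_exp.injOn hz₁ hw₁ (hz.trans h))
  · rintro (rfl | rfl)
    exacts [rfl, h.symm]

lemma neg_exp_one_div_ne_mul_exp_neg_one {a : ℝ} (ha : exp 1 ^ 2 < a) :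
    -exp 1 / a ≠ -1 * exp (-1) := by
  have ha₀ : 0 < a := (pow_pos (exp_pos 1) 2).trans ha
  rw [exp_neg, ne_eq, div_eq_iff ha₀.ne']
  intro h
  field_simp at h
  exact ha.ne' (by nlinarith)

lemma neg_one_lt_of_mul_exp_eq {a w : ℝ} (ha : exp 1 ^ 2 < a) (hw : -1 ≤ w)
    (h : w * exp w = -exp 1 / a) : -1 < w := by
  refine lt_of_le_of_ne hw fun hw₁ => neg_exp_one_div_ne_mul_exp_neg_one ha ?_
  rw [← h, ← hw₁]

lemma lt_neg_one_of_mul_exp_eq {a w : ℝ} (ha : exp 1 ^ 2 < a) (hw : w ≤ -1)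
    (h : w * exp w = -exp 1 / a) : w < -1 := by
  refine lt_of_le_of_ne hw fun hw₁ => neg_exp_one_div_ne_mul_exp_neg_one ha ?_
  rw [← h, hw₁]

end MulExp

section Profile

variable {a b : ℝ}

lemma hasDerivAt_one_add_mul_exp_neg_div_mul (x : ℝ) :
    HasDerivAt (fun x : ℝ => (1 + a * exp (-x / b)) * x)
      (1 + a * exp (-x / b) * (1 - x / b)) x := by
  have hexp : HasDerivAt (fun x : ℝ => exp (-x / b)) (exp (-x / b) * (-1 / b)) x :=
    ((hasDerivAt_neg x).div_const b).exp
  exact (((hexp.const_mul a).const_add 1).mul (hasDerivAt_id x)).congr_deriv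
    (by simp only [id]; ring)

lemma hasDerivAt_one_add_mul_exp_neg_div_mul_one_sub (hb : b ≠ 0) (x : ℝ) :
    HasDerivAt (fun x : ℝ => 1 + a * exp (-x / b) * (1 - x / b))
      (a * exp (-x / b) * (x - 2 * b) / b ^ 2) x := by
  have hexp : HasDerivAt (fun x : ℝ => exp (-x / b)) (exp (-x / b) * (-1 / b)) x :=
    ((hasDerivAt_neg x).div_const b).exp
  refine (((hexp.const_mul a).mul
    (((hasDerivAt_id x).div_const b).const_sub 1)).const_add 1).congr_deriv ?_
  simp only [id]
  field_simp
  ring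

lemma one_add_mul_exp_neg_div_mul_one_sub_eq_zero_iff (ha : a ≠ 0) (x : ℝ) :
    1 + a * exp (-x / b) * (1 - x / b) = 0 ↔
      (1 - x / b) * exp (1 - x / b) = -exp 1 / a := by
  rw [sub_eq_add_neg, exp_add, ← neg_div, eq_div_iff ha]
  constructor <;> intro h <;> nlinarith [exp_pos 1]

lemma one_sub_div_eq_iff (hb : b ≠ 0) {x w : ℝ} : 1 - x / b = w ↔ x = b * (1 - w) := by
  constructor <;> intro h
  · rw [← h]; field_simp; ring
  · rw [h]; field_simp; ring

end Profile

theorem stmt_13 (a b : ℝ) (ha : Real.exp 1 ^ 2 < a) (hb : 0 < b)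
    (f : ℝ → ℝ) (hf : f = fun x : ℝ => (1 + a * Real.exp (-x / b)) * x)
    (w0 w1 : ℝ) (hw0 : -1 ≤ w0 ∧ w0 * Real.exp w0 = -(Real.exp 1) / a)
    (hw1 : w1 ≤ -1 ∧ w1 * Real.exp w1 = -(Real.exp 1) / a)
    (x0 x1 : ℝ) (hx0 : x0 = b * (1 - w0)) (hx1 : x1 = b * (1 - w1)) :
    (∀ x : ℝ, b < x → (deriv f x = 0 ↔ x = x0 ∨ x = x1)) ∧
    b < x0 ∧ x0 < 2 * b ∧ 2 * b < x1 ∧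
    deriv (deriv f) x0 < 0 ∧ 0 < deriv (deriv f) x1 := by
  obtain ⟨hw0, hw0e⟩ := hw0
  obtain ⟨hw1, hw1e⟩ := hw1
  have ha₀ : 0 < a := (pow_pos (exp_pos 1) 2).trans ha
  have hw0_gt := neg_one_lt_of_mul_exp_eq ha hw0 hw0e
  have hw1_lt := lt_neg_one_of_mul_exp_eq ha hw1 hw1e
  have hw0_neg : w0 < 0 :=
    neg_of_mul_neg_left (hw0e ▸ div_neg_of_neg_of_pos (neg_neg_of_pos (exp_pos 1)) ha₀)
      (exp_pos w0).le
  have hdf : deriv f = fun x => 1 + a * exp (-x / b) * (1 - x / b) :=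
    funext fun x => hf ▸ (hasDerivAt_one_add_mul_exp_neg_div_mul x).deriv
  have hd2f (x : ℝ) : deriv (deriv f) x = a * exp (-x / b) * (x - 2 * b) / b ^ 2 :=
    hdf ▸ (hasDerivAt_one_add_mul_exp_neg_div_mul_one_sub hb.ne' x).deriv
  have hx0_lt : x0 < 2 * b := by rw [hx0]; nlinarith
  have hx1_gt : 2 * b < x1 := by rw [hx1]; nlinarith
  refine ⟨fun x _ => ?_, by rw [hx0]; nlinarith, hx0_lt, hx1_gt, ?_, ?_⟩
  · rw [hdf, one_add_mul_exp_neg_div_mul_one_sub_eq_zero_iff ha₀.ne', ← hw0e,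
      mul_exp_eq_iff hw0 hw1 (hw0e.trans hw1e.symm), one_sub_div_eq_iff hb.ne',
      one_sub_div_eq_iff hb.ne', hx0, hx1]
  · rw [hd2f]
    exact div_neg_of_neg_of_pos (mul_neg_of_pos_of_neg (by positivity) (by linarith))
      (by positivity)
  · rw [hd2f]
    exact div_pos (mul_pos (by positivity) (by linarith)) (by positivity)
end

section
/- Let a, b ∈ ℝ with -1 < a < 0 and b < 0, and set M := (1 + a·exp(W₀(-e/a) - 1))·b·(1 - W₀(-e/a)). If 0 < y < M, then the equation |1 + a·exp(-x/b)|·x = y has exactly three solutions in [0,∞). -/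
open Real Set Filter

/-!
Write `g(x) = (1 + a e^{-x/b}) x`, so that the equation reads `|g(x)| = y`. The factor
`1 + a e^{-x/b}` is strictly decreasing and vanishes at `d = b log(-a)`, so the equation is
`g = y` on `[0, d]` and `g = -y` on `[d, ∞)`. The derivative `g' = 1 + a e^{-x/b} (1 - x/b)`
is strictly decreasing on `[0, ∞)`, and the Lambert equation for `z₀` says exactly that it vanishes
at `x₀ = b (1 - z₀)`, where `g(x₀) = M`. Hence `g` rises from `0` to `M` on `[0, x₀]`, falls back
to `0` on `[x₀, d]` and then decreases to `-∞`: each of the three pieces contributes one solution.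
-/

noncomputable def profile (a b x : ℝ) : ℝ := (1 + a * exp (-x / b)) * x

section

variable {a b : ℝ}

lemma continuous_profile (a b : ℝ) : Continuous (profile a b) := by
  unfold profile
  fun_prop

lemma hasDerivAt_profile (a b x : ℝ) :
    HasDerivAt (profile a b) (1 + a * exp (-x / b) * (1 - x / b)) x := by
  have hexp : HasDerivAt (fun x => exp (-x / b)) (exp (-x / b) * (-1 / b)) x :=
    ((hasDerivAt_id x).neg.div_const b).exp
  exact (((hexp.const_mul a).const_add 1).mul (hasDerivAt_id' x)).congr_deriv (by ring)

lemma strictAnti_one_add_mul_exp (ha : a < 0) (hb : b < 0) :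
    StrictAnti fun x : ℝ => 1 + a * exp (-x / b) := by
  intro u v huv
  have : exp (-u / b) < exp (-v / b) :=
    exp_lt_exp.2 ((div_lt_div_right_of_neg hb).2 (neg_lt_neg huv))
  simpa using mul_lt_mul_of_neg_left this ha

lemma one_add_mul_exp_log_neg (ha : a < 0) (hb : b ≠ 0) :
    1 + a * exp (-(b * log (-a)) / b) = 0 := by
  rw [neg_div, mul_div_cancel_left₀ _ hb, exp_neg, exp_log (neg_pos.2 ha), inv_neg, mul_neg,
    mul_inv_cancel₀ ha.ne, add_neg_cancel]

lemma profile_log_neg (ha : a < 0) (hb : b ≠ 0) : profile a b (b * log (-a)) = 0 := by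
  rw [profile, one_add_mul_exp_log_neg ha hb, zero_mul]

lemma nonneg_one_add_mul_exp_iff (ha : a < 0) (hb : b < 0) {x : ℝ} :
    0 ≤ 1 + a * exp (-x / b) ↔ x ≤ b * log (-a) := by
  rw [← one_add_mul_exp_log_neg ha hb.ne]
  exact (strictAnti_one_add_mul_exp ha hb).le_iff_ge

lemma one_add_mul_exp_nonpos_iff (ha : a < 0) (hb : b < 0) {x : ℝ} :
    1 + a * exp (-x / b) ≤ 0 ↔ b * log (-a) ≤ x := by
  rw [← one_add_mul_exp_log_neg ha hb.ne]
  exact (strictAnti_one_add_mul_exp ha hb).le_iff_ge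

lemma strictAntiOn_mul_exp_mul (ha : a < 0) (hb : b < 0) :
    StrictAntiOn (fun x => a * exp (-x / b) * (1 - x / b)) (Ici 0) := by
  intro u (hu : 0 ≤ u) v _ huv
  have hexp : exp (-u / b) < exp (-v / b) :=
    exp_lt_exp.2 ((div_lt_div_right_of_neg hb).2 (neg_lt_neg huv))
  have hlin : 1 - u / b < 1 - v / b := sub_lt_sub_left ((div_lt_div_right_of_neg hb).2 huv) 1
  have hlin0 : 0 ≤ 1 - u / b := by
    have := div_nonpos_of_nonneg_of_nonpos hu hb.le
    linarith
  have hprod := mul_lt_mul'' hexp hlin (exp_pos _).le hlin0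
  simpa only [mul_assoc] using mul_lt_mul_of_neg_left hprod ha

lemma strictMonoOn_profile (ha : a < 0) (hb : b < 0) {c : ℝ}
    (hc : a * exp (-c / b) * (1 - c / b) = -1) : StrictMonoOn (profile a b) (Icc 0 c) := by
  refine strictMonoOn_of_deriv_pos (convex_Icc 0 c) (continuous_profile a b).continuousOn ?_
  rw [interior_Icc]
  rintro x ⟨hx0, hxc⟩
  rw [(hasDerivAt_profile a b x).deriv]
  have := strictAntiOn_mul_exp_mul ha hb (mem_Ici.2 hx0.le) (mem_Ici.2 (hx0.trans hxc).le) hxc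
  simp only at this
  linarith

lemma strictAntiOn_profile (ha : a < 0) (hb : b < 0) {c : ℝ} (hc0 : 0 ≤ c)
    (hc : a * exp (-c / b) * (1 - c / b) = -1) : StrictAntiOn (profile a b) (Ici c) := by
  refine strictAntiOn_of_deriv_neg (convex_Ici c) (continuous_profile a b).continuousOn ?_
  intro x hx
  rw [interior_Ici] at hx
  rw [(hasDerivAt_profile a b x).deriv]
  have := strictAntiOn_mul_exp_mul ha hb (mem_Ici.2 hc0) (mem_Ici.2 (hc0.trans hx.le)) hx
  simp only at this
  linarith

lemma tendsto_profile_atTop (ha : a < 0) (hb : b < 0) :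
    Tendsto (profile a b) atTop atBot := by
  have hlin : Tendsto (fun x : ℝ => -x / b) atTop atTop := by
    simpa only [id, neg_div, div_neg] using tendsto_id.atTop_div_const (neg_pos.2 hb)
  have hfac : Tendsto (fun x => 1 + a * exp (-x / b)) atTop atBot :=
    tendsto_atBot_add_const_left _ 1 ((tendsto_exp_atTop.comp hlin).const_mul_atTop_of_neg ha)
  exact hfac.atBot_mul_atTop₀ tendsto_id

variable {z : ℝ}

lemma neg_mul_one_sub_div (hb : b ≠ 0) : -(b * (1 - z)) / b = z - 1 := by
  rw [neg_div, mul_div_cancel_left₀ _ hb, neg_sub]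

lemma critical_point_eq (hb : b ≠ 0) (hz : a * exp (z - 1) * z = -1) :
    a * exp (-(b * (1 - z)) / b) * (1 - b * (1 - z) / b) = -1 := by
  rwa [neg_mul_one_sub_div hb, mul_div_cancel_left₀ _ hb, sub_sub_cancel]

lemma setOf_abs_mul_eq_triple (ha : a < 0) (hb : b < 0) {c y x₁ x₂ x₃ : ℝ}
    (hc : a * exp (-c / b) * (1 - c / b) = -1) (hcd : c < b * log (-a))
    (hx₁ : x₁ ∈ Ioo 0 c) (hx₂ : x₂ ∈ Ioo c (b * log (-a))) (hx₃ : b * log (-a) < x₃)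
    (h₁ : profile a b x₁ = y) (h₂ : profile a b x₂ = y) (h₃ : profile a b x₃ = -y) :
    {x : ℝ | 0 ≤ x ∧ |1 + a * exp (-x / b)| * x = y} = {x₁, x₂, x₃} := by
  have hc0 : 0 ≤ c := hx₁.1.le.trans hx₁.2.le
  have hmono := strictMonoOn_profile ha hb hc
  have hanti := strictAntiOn_profile ha hb hc0 hc
  ext x
  simp only [mem_ofPred_eq, mem_insert_iff, mem_singleton_iff]
  constructor
  · rintro ⟨hx0, hxy⟩
    rcases le_total x (b * log (-a)) with hxd | hdx
    · have hgx : profile a b x = y := by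
        rwa [abs_of_nonneg ((nonneg_one_add_mul_exp_iff ha hb).2 hxd)] at hxy
      rcases le_total x c with hxc | hcx
      · exact Or.inl (hmono.injOn ⟨hx0, hxc⟩ (Ioo_subset_Icc_self hx₁) (hgx.trans h₁.symm))
      · exact Or.inr (Or.inl (hanti.injOn hcx hx₂.1.le (hgx.trans h₂.symm)))
    · have hgx : profile a b x = -y := by
        rw [abs_of_nonpos ((one_add_mul_exp_nonpos_iff ha hb).2 hdx)] at hxy
        rw [profile]
        linarith
      exact Or.inr (Or.inr
        (hanti.injOn (hcd.le.trans hdx) (hcd.trans hx₃).le (hgx.trans h₃.symm)))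
  · rintro (rfl | rfl | rfl)
    · refine ⟨hx₁.1.le, ?_⟩
      rwa [abs_of_nonneg ((nonneg_one_add_mul_exp_iff ha hb).2 (hx₁.2.trans hcd).le)]
    · refine ⟨hc0.trans hx₂.1.le, ?_⟩
      rwa [abs_of_nonneg ((nonneg_one_add_mul_exp_iff ha hb).2 hx₂.2.le)]
    · refine ⟨(hc0.trans hcd.le).trans hx₃.le, ?_⟩
      rw [abs_of_nonpos ((one_add_mul_exp_nonpos_iff ha hb).2 hx₃.le)]
      rw [profile] at h₃
      linarith

theorem ncard_setOf_abs_mul_eq_three (ha : a < 0) (hb : b < 0) (hz1 : 1 < z)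
    (hz : a * exp (z - 1) * z = -1) {y : ℝ} (hy : 0 < y) (hyM : y < profile a b (b * (1 - z))) :
    {x : ℝ | 0 ≤ x ∧ |1 + a * exp (-x / b)| * x = y}.ncard = 3 := by
  have hc : 0 < b * (1 - z) := mul_pos_of_neg_of_neg hb (by linarith)
  have hcrit := critical_point_eq hb.ne hz
  -- the factor is `1 - 1 / z > 0` at the critical point, and `0` at `b log(-a)`
  have hcd : b * (1 - z) < b * log (-a) := by
    refine (strictAnti_one_add_mul_exp ha hb).lt_iff_gt.1 ?_
    rw [one_add_mul_exp_log_neg ha hb.ne, neg_mul_one_sub_div hb.ne]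
    nlinarith [exp_pos (z - 1)]
  have hcont := continuous_profile a b
  have hzero := profile_log_neg ha hb.ne
  obtain ⟨x₁, hx₁, h₁⟩ :=
    intermediate_value_Ioo hc.le hcont.continuousOn ⟨by simpa [profile] using hy, hyM⟩
  obtain ⟨x₂, hx₂, h₂⟩ :=
    intermediate_value_Ioo' hcd.le hcont.continuousOn ⟨hzero ▸ hy, hyM⟩
  obtain ⟨x₃, hx₃, h₃⟩ :=
    intermediate_value_Ioi' hcont.continuousOn (tendsto_profile_atTop ha hb)
      (show -y < profile a b (b * log (-a)) by rw [hzero]; linarith)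
  rw [setOf_abs_mul_eq_triple ha hb hcrit hcd hx₁ hx₂ hx₃ h₁ h₂ h₃, ncard_eq_three]
  exact ⟨x₁, x₂, x₃, (hx₁.2.trans hx₂.1).ne, (hx₁.2.trans (hcd.trans hx₃)).ne,
    (hx₂.2.trans hx₃).ne, rfl⟩

end

lemma one_lt_of_mul_exp_eq {a z : ℝ} (ha1 : -1 < a) (ha2 : a < 0)
    (hz : z * exp z = -exp 1 / a) : 1 < z := by
  by_contra! h
  have hle : z * exp z ≤ 1 * exp 1 := mul_le_mul h (exp_le_exp.2 h) (exp_pos z).le zero_le_one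
  have hlt : exp 1 < -exp 1 / a := by
    rw [lt_div_iff_of_neg ha2]
    nlinarith [exp_pos 1]
  linarith

lemma mul_exp_sub_one_mul_eq {a z : ℝ} (ha : a ≠ 0) (hz : z * exp z = -exp 1 / a) :
    a * exp (z - 1) * z = -1 := by
  rw [exp_sub]
  field_simp
  field_simp at hz
  linarith

theorem stmt_16 (a b : ℝ) (ha1 : -1 < a) (ha2 : a < 0) (hb : b < 0)
    (z0 : ℝ) (hz0 : -1 ≤ z0 ∧ z0 * Real.exp z0 = -(Real.exp 1) / a)
    (M : ℝ) (hM : M = (1 + a * Real.exp (z0 - 1)) * (b * (1 - z0)))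
    (y : ℝ) (hy1 : 0 < y) (hy2 : y < M) :
    {x : ℝ | 0 ≤ x ∧ |1 + a * Real.exp (-x / b)| * x = y}.ncard = 3 := by
  have hz1 := one_lt_of_mul_exp_eq ha1 ha2 hz0.2
  refine ncard_setOf_abs_mul_eq_three ha2 hb hz1 (mul_exp_sub_one_mul_eq ha2.ne hz0.2) hy1 ?_
  rwa [profile, neg_mul_one_sub_div hb.ne, ← hM]
end
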